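/- arXiv:2406.07878 — 3 statements merged into one kernel-verified Lean document; each statement's English description precedes it below -/
import Mathlib

section
/- Let p₁,p₂,p₃ ∈ (0,1) and let x₂,x₃ be real numbers. Then V(1,x₂,x₃) − V(0,x₂,x₃) = p₁(1−p₃)(p₁+p₃−1)(p₁−p₃) / (3(1−p₃+p₃²)(1−p₁+p₁²)). In particular, V(x₁,x₂,x₃) is an affine function of x₁ whose coefficient on x₁ is p₁(1−p₃)(p₁+p₃−1)(p₁−p₃)/(3(1−p₃+p₃²)(1−p₁+p₁²)). -/
/-- Player 1's winning probability from state `(1,1,1)` in the three-gambler ruin game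
with total capital `K = 3` (see the paper's Section 3). -/
noncomputable def V111 (p₁ p₂ p₃ x₁ x₂ x₃ : ℝ) : ℝ :=
  (1 / 3) * (x₁ * p₁ * ((1 - p₃) / (1 - p₃ + p₃ ^ 2))
      + (1 - x₁) * (1 - p₃) * (p₁ / (1 - p₁ + p₁ ^ 2)))
  + (1 / 3) * (x₂ * (p₂ * (p₁ ^ 2 / (1 - p₁ + p₁ ^ 2))
        + (1 - p₂) * ((1 - p₃) ^ 2 / (1 - p₃ + p₃ ^ 2)))
      + (1 - x₂) * p₁ * ((1 - p₃) / (1 - p₃ + p₃ ^ 2)))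
  + (1 / 3) * (x₃ * (1 - p₃) * (p₁ / (1 - p₁ + p₁ ^ 2))
      + (1 - x₃) * (p₂ * (p₁ ^ 2 / (1 - p₁ + p₁ ^ 2))
        + (1 - p₂) * ((1 - p₃) ^ 2 / (1 - p₃ + p₃ ^ 2))))

/-- `V₁(1,1,1)` is an affine function of `x₁` with coefficient
`p₁(1−p₃)(p₁+p₃−1)(p₁−p₃) / (3(1−p₃+p₃²)(1−p₁+p₁²))`. -/
theorem V111_affine_in_x1 (p₁ p₂ p₃ : ℝ) (hp₁ : p₁ ∈ Set.Ioo (0 : ℝ) 1)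
    (hp₂ : p₂ ∈ Set.Ioo (0 : ℝ) 1) (hp₃ : p₃ ∈ Set.Ioo (0 : ℝ) 1)
    (x₂ x₃ : ℝ) :
    (V111 p₁ p₂ p₃ 1 x₂ x₃ - V111 p₁ p₂ p₃ 0 x₂ x₃ =
      p₁ * (1 - p₃) * (p₁ + p₃ - 1) * (p₁ - p₃)
        / (3 * (1 - p₃ + p₃ ^ 2) * (1 - p₁ + p₁ ^ 2))) ∧
    (∀ x₁ : ℝ, V111 p₁ p₂ p₃ x₁ x₂ x₃ =
      (p₁ * (1 - p₃) * (p₁ + p₃ - 1) * (p₁ - p₃)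
        / (3 * (1 - p₃ + p₃ ^ 2) * (1 - p₁ + p₁ ^ 2))) * x₁
      + V111 p₁ p₂ p₃ 0 x₂ x₃) := by

  have h1 : (1 : ℝ) - p₁ + p₁ ^ 2 ≠ 0 := by nlinarith [sq_nonneg (p₁ - 1), sq_nonneg p₁]
  have h3 : (1 : ℝ) - p₃ + p₃ ^ 2 ≠ 0 := by nlinarith [sq_nonneg (p₃ - 1), sq_nonneg p₃]
  have key : (1/3 : ℝ) * (p₁ * ((1 - p₃) / (1 - p₃ + p₃ ^ 2)) - (1 - p₃) * (p₁ / (1 - p₁ + p₁ ^ 2)))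
      = p₁ * (1 - p₃) * (p₁ + p₃ - 1) * (p₁ - p₃)
        / (3 * (1 - p₃ + p₃ ^ 2) * (1 - p₁ + p₁ ^ 2)) := by
    field_simp
    ring
  constructor
  · rw [← key]; unfold V111; ring
  · intro x₁
    rw [show (p₁ * (1 - p₃) * (p₁ + p₃ - 1) * (p₁ - p₃)
        / (3 * (1 - p₃ + p₃ ^ 2) * (1 - p₁ + p₁ ^ 2))) = _ from key.symm]
    unfold V111; ring
end

section
/- Let p₁,p₂,p₃ ∈ (0,1) and fix x₂,x₃ ∈ [0,1]. If (p₁+p₃−1)(p₁−p₃) > 0, then for every x₁ ∈ [0,1] one has V(x₁,x₂,x₃) ≤ V(1,x₂,x₃), with strict inequality whenever x₁ < 1; if (p₁+p₃−1)(p₁−p₃) < 0, then for every x₁ ∈ [0,1] one has V(x₁,x₂,x₃) ≤ V(0,x₂,x₃), with strict inequality whenever x₁ > 0. (Thus player 1's optimal choice at state (1,1,1) is x̂₁ = 1 in the first case and x̂₁ = 0 in the second case.) -/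
/-- Player 1's optimal choice at state `(1,1,1)`: if `(p₁+p₃−1)(p₁−p₃) > 0` then
`x̂₁ = 1` is optimal (strictly better than any `x₁ < 1`), and if
`(p₁+p₃−1)(p₁−p₃) < 0` then `x̂₁ = 0` is optimal (strictly better than any `x₁ > 0`). -/
theorem V111_optimal_x1 (p₁ p₂ p₃ : ℝ) (hp₁ : p₁ ∈ Set.Ioo (0 : ℝ) 1)
    (hp₂ : p₂ ∈ Set.Ioo (0 : ℝ) 1) (hp₃ : p₃ ∈ Set.Ioo (0 : ℝ) 1)
    (x₂ x₃ : ℝ) (hx₂ : x₂ ∈ Set.Icc (0 : ℝ) 1) (hx₃ : x₃ ∈ Set.Icc (0 : ℝ) 1) :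
    ((p₁ + p₃ - 1) * (p₁ - p₃) > 0 →
      ∀ x₁ ∈ Set.Icc (0 : ℝ) 1,
        V111 p₁ p₂ p₃ x₁ x₂ x₃ ≤ V111 p₁ p₂ p₃ 1 x₂ x₃ ∧
        (x₁ < 1 → V111 p₁ p₂ p₃ x₁ x₂ x₃ < V111 p₁ p₂ p₃ 1 x₂ x₃)) ∧
    ((p₁ + p₃ - 1) * (p₁ - p₃) < 0 →
      ∀ x₁ ∈ Set.Icc (0 : ℝ) 1,
        V111 p₁ p₂ p₃ x₁ x₂ x₃ ≤ V111 p₁ p₂ p₃ 0 x₂ x₃ ∧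
        (0 < x₁ → V111 p₁ p₂ p₃ x₁ x₂ x₃ < V111 p₁ p₂ p₃ 0 x₂ x₃)) := by
  obtain ⟨h1, h2⟩ := hp₁
  obtain ⟨h5, h6⟩ := hp₃
  have hD1 : (0:ℝ) < 1 - p₁ + p₁ ^ 2 := by nlinarith
  have hD3 : (0:ℝ) < 1 - p₃ + p₃ ^ 2 := by nlinarith
  set C : ℝ := (1 / 3) * (p₁ * (1 - p₃) * ((p₁ + p₃ - 1) * (p₁ - p₃)) /
      ((1 - p₁ + p₁ ^ 2) * (1 - p₃ + p₃ ^ 2))) with hC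
  have hE : (1 / 3) * (p₁ * ((1 - p₃) / (1 - p₃ + p₃ ^ 2))
      - (1 - p₃) * (p₁ / (1 - p₁ + p₁ ^ 2))) = C := by
    rw [hC]
    field_simp
    ring
  have key : ∀ x₁ : ℝ, V111 p₁ p₂ p₃ x₁ x₂ x₃ = V111 p₁ p₂ p₃ 0 x₂ x₃ + x₁ * C := by
    intro x₁
    rw [← hE]
    simp only [V111]
    ring
  constructor
  · intro hpos x₁ hx₁
    have hCpos : 0 < C := by
      rw [hC]
      have hnum : 0 < p₁ * (1 - p₃) * ((p₁ + p₃ - 1) * (p₁ - p₃)) :=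
        mul_pos (mul_pos h1 (by linarith)) hpos
      have hd : (0:ℝ) < (1 - p₁ + p₁ ^ 2) * (1 - p₃ + p₃ ^ 2) := mul_pos hD1 hD3
      positivity
    rw [key x₁, key 1]
    constructor
    · nlinarith [hx₁.2]
    · intro h
      nlinarith
  · intro hneg x₁ hx₁
    have hCneg : C < 0 := by
      rw [hC]
      have : p₁ * (1 - p₃) * ((p₁ + p₃ - 1) * (p₁ - p₃)) < 0 :=
        mul_neg_of_pos_of_neg (mul_pos h1 (by linarith)) hneg
      have hd : (0:ℝ) < (1 - p₁ + p₁ ^ 2) * (1 - p₃ + p₃ ^ 2) := by positivity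
      have := div_neg_of_neg_of_pos this hd
      nlinarith
    rw [key x₁, key 0]
    constructor
    · nlinarith [hx₁.1]
    · intro h
      nlinarith
end

section
/- Let n and m be finite index types, let W be a real m × n matrix and U a real m × m matrix such that the powers Uᵗ converge entrywise to the zero matrix as t → ∞. Let Π be the square block matrix Π = [[I, 0], [W, U]] (on the index type n ⊕ m, with I the n × n identity). Then I − U is invertible, the powers Πᵗ converge entrywise as t → ∞, and lim_{t→∞} Πᵗ = [[I, 0], [(I−U)⁻¹W, 0]]. -/
/-!
Induction gives `Πᵗ = [[I, 0], [(∑_{k<t} Uᵏ) W, Uᵗ]]`. A fixed vector of `U` is fixed by every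
`Uᵗ`, hence is `0` since `Uᵗ → 0`; so `I − U` is invertible, `∑_{k<t} Uᵏ = (I − U)⁻¹ (I − Uᵗ)`,
and the blocks converge to `(I − U)⁻¹ W` and `0`.
-/

open Filter Topology Matrix Finset

theorem tendsto_geom_sum_of_tendsto_pow_zero {R : Type*} [Ring R] [TopologicalSpace R]
    [IsTopologicalRing R] {a : R} (h : IsUnit (1 - a))
    (ha : Tendsto (fun t : ℕ => a ^ t) atTop (𝓝 0)) :
    Tendsto (fun t : ℕ => ∑ k ∈ range t, a ^ k) atTop (𝓝 (Ring.inverse (1 - a))) := by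
  have hsum : ∀ t : ℕ, ∑ k ∈ range t, a ^ k = Ring.inverse (1 - a) * (1 - a ^ t) := fun t => by
    rw [← mul_neg_geom_sum, Ring.inverse_mul_cancel_left _ _ h]
  simpa only [hsum, sub_zero, mul_one] using (ha.const_sub 1).const_mul (Ring.inverse (1 - a))

namespace Matrix

variable {m n R : Type*} [Fintype m] [DecidableEq m]

theorem isUnit_one_sub_of_tendsto_pow_zero [Field R] [TopologicalSpace R]
    [IsTopologicalRing R] [T2Space R] {U : Matrix m m R}
    (hU : Tendsto (fun t : ℕ => U ^ t) atTop (𝓝 0)) : IsUnit (1 - U) := by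
  rw [isUnit_iff_isUnit_det, isUnit_iff_ne_zero]
  intro hdet
  obtain ⟨v, hv, hv_ker⟩ := exists_mulVec_eq_zero_iff.mpr hdet
  have hfix : U *ᵥ v = v := by
    rw [sub_mulVec, one_mulVec, sub_eq_zero] at hv_ker
    exact hv_ker.symm
  have hpow_fix : ∀ t : ℕ, U ^ t *ᵥ v = v := fun t => by
    induction t with
    | zero => simp
    | succ t ih => rw [pow_succ, ← mulVec_mulVec, hfix, ih]
  have hlim : Tendsto (fun t : ℕ => U ^ t *ᵥ v) atTop (𝓝 (0 *ᵥ v)) :=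
    ((continuous_id.matrix_mulVec continuous_const).tendsto _).comp hU
  simp only [hpow_fix, zero_mulVec] at hlim
  exact hv (tendsto_nhds_unique tendsto_const_nhds hlim)

variable [Fintype n] [DecidableEq n] [Semiring R]

theorem fromBlocks_one_zero_pow (W : Matrix m n R) (U : Matrix m m R) (t : ℕ) :
    fromBlocks (1 : Matrix n n R) 0 W U ^ t =
      fromBlocks 1 0 ((∑ k ∈ range t, U ^ k) * W) (U ^ t) := by
  induction t with
  | zero => simp [fromBlocks_one]
  | succ t ih =>
    rw [pow_succ, ih, fromBlocks_multiply, sum_range_succ, Matrix.add_mul]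
    simp [pow_succ]

end Matrix

/-- If `Π = [[I, 0], [W, U]]` is a block matrix with `Uᵗ → 0` entrywise, then `I − U`
is invertible, the powers `Πᵗ` converge entrywise, and
`lim Πᵗ = [[I, 0], [(I−U)⁻¹W, 0]]`. -/
theorem absorbing_block_matrix_power_limit
    {n m : Type*} [Fintype n] [Fintype m] [DecidableEq n] [DecidableEq m]
    (W : Matrix m n ℝ) (U : Matrix m m ℝ)
    (hU : Tendsto (fun t : ℕ => U ^ t) atTop (𝓝 0)) :
    IsUnit ((1 : Matrix m m ℝ) - U) ∧
    Tendsto (fun t : ℕ => (Matrix.fromBlocks (1 : Matrix n n ℝ) (0 : Matrix n m ℝ) W U) ^ t)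
      atTop
      (𝓝 (Matrix.fromBlocks (1 : Matrix n n ℝ) (0 : Matrix n m ℝ)
            (((1 : Matrix m m ℝ) - U)⁻¹ * W) (0 : Matrix m m ℝ))) := by
  have hunit := isUnit_one_sub_of_tendsto_pow_zero hU
  refine ⟨hunit, ?_⟩
  have hsum : Tendsto (fun t : ℕ => (∑ k ∈ range t, U ^ k) * W) atTop (𝓝 ((1 - U)⁻¹ * W)) := by
    rw [nonsing_inv_eq_ringInverse]
    exact ((continuous_id.matrix_mul continuous_const).tendsto _).comp
      (tendsto_geom_sum_of_tendsto_pow_zero hunit hU)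
  have hblocks : Continuous fun p : Matrix m n ℝ × Matrix m m ℝ =>
      fromBlocks (1 : Matrix n n ℝ) (0 : Matrix n m ℝ) p.1 p.2 :=
    continuous_const.matrix_fromBlocks continuous_const continuous_fst continuous_snd
  simp only [fromBlocks_one_zero_pow]
  exact (hblocks.tendsto _).comp (hsum.prodMk_nhds hU)
end
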